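/- Covering (I,J̄)-forests are in bijection with ν-Schröder trees, where ν is the lattice path read from the interleaving of I and J̄. -/

import Mathlib

/-- Steps of a (Schröder) lattice path: north, east, diagonal. -/
inductive Step : Type
  | N | E | D
deriving DecidableEq, Repr

/-- Total horizontal displacement of a path. -/
def eLen (p : List Step) : ℕ := p.count Step.E + p.count Step.D

/-- Total vertical displacement of a path. -/
def nLen (p : List Step) : ℕ := p.count Step.N + p.count Step.D

/-- A lattice path uses only `N` and `E` steps. -/
def IsLatticePath (ν : List Step) : Prop := Step.D ∉ ν

/-- `colVal p x` is twice the starting height of the step of `p` crossing the vertical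
strip between abscissas `x` and `x+1`, plus `1` if that step is diagonal.  Comparing these
values columnwise is equivalent to comparing the heights of the paths over each strip. -/
def colVal : List Step → ℕ → ℕ
  | [], _ => 0
  | Step.N :: p, x => colVal p x + 2
  | Step.E :: _, 0 => 0
  | Step.E :: p, x+1 => colVal p x
  | Step.D :: _, 0 => 1
  | Step.D :: p, x+1 => colVal p x + 2

/-- `π` stays weakly above `ρ` (same endpoints intended). -/
def WeaklyAbove (π ρ : List Step) : Prop := ∀ x, colVal ρ x ≤ colVal π x

/-- Replace every peak (consecutive `NE`) of a path by a diagonal step; applied to `ν`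
this gives the path `μ` of the large ν-Schröder path definition. -/
def cutPeaks : List Step → List Step
  | [] => []
  | Step.N :: Step.E :: p => Step.D :: cutPeaks p
  | s :: p => s :: cutPeaks p

/-- A ν-Dyck path: an `N,E` path with the same endpoints as `ν` staying weakly above `ν`. -/
def IsNuDyck (ν π : List Step) : Prop :=
  Step.D ∉ π ∧ eLen π = eLen ν ∧ nLen π = nLen ν ∧ WeaklyAbove π ν

/-- A (small) ν-Schröder path: an `N,E,D` path with the same endpoints as `ν` staying weakly
above `ν` (this automatically forbids diagonal steps on the ν-diagonal). -/
def IsSmallSchroder (ν π : List Step) : Prop :=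
  eLen π = eLen ν ∧ nLen π = nLen ν ∧ WeaklyAbove π ν

/-- A large ν-Schröder path: an `N,E,D` path with the same endpoints as `ν` staying weakly
above the path obtained from `ν` by replacing each peak by a diagonal step. -/
def IsLargeSchroder (ν π : List Step) : Prop :=
  eLen π = eLen ν ∧ nLen π = nLen ν ∧ WeaklyAbove π (cutPeaks ν)

/-- Number of peaks (consecutive `NE` pairs). -/
def peaks (p : List Step) : ℕ := (p.zip p.tail).count (Step.N, Step.E)

/-- Number of valleys (consecutive `EN` pairs). -/
def valleys (p : List Step) : ℕ := (p.zip p.tail).count (Step.E, Step.N)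

/-- Lattice points at which valleys of a path occur (starting the path at `(x,y)`). -/
def valleyPts : List Step → ℕ → ℕ → List (ℕ × ℕ)
  | [], _, _ => []
  | Step.E :: p, x, y =>
      (if p.head? = some Step.N then [(x+1, y)] else []) ++ valleyPts p (x+1) y
  | Step.N :: p, x, y => valleyPts p x (y+1)
  | Step.D :: p, x, y => valleyPts p (x+1) (y+1)

/-- Lattice points at which high peaks (peaks strictly above `ν`) of a path occur. -/
def highPeakPts (ν : List Step) : List Step → ℕ → ℕ → List (ℕ × ℕ)
  | [], _, _ => []
  | Step.N :: p, x, y =>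
      (if p.head? = some Step.E ∧ colVal ν x < 2*(y+1) then [(x, y+1)] else []) ++
        highPeakPts ν p x (y+1)
  | Step.E :: p, x, y => highPeakPts ν p (x+1) y
  | Step.D :: p, x, y => highPeakPts ν p (x+1) (y+1)

/-- Number of high peaks of `π` relative to `ν`. -/
def highPeaks (ν π : List Step) : ℕ := (highPeakPts ν π 0 0).length

/-- j-th ν-Narayana number: number of ν-Dyck paths with exactly `j` valleys. -/
noncomputable def Nar (ν : List Step) (j : ℕ) : ℕ :=
  Nat.card {π : List Step // IsNuDyck ν π ∧ valleys π = j}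

/-- Number of small ν-Schröder paths with exactly `i` diagonal steps. -/
noncomputable def schNum (ν : List Step) (i : ℕ) : ℕ :=
  Nat.card {π : List Step // IsSmallSchroder ν π ∧ π.count Step.D = i}

/-- `lowH ν x` is the lowest height of a point of `ν` at abscissa `x`. -/
def lowH : List Step → ℕ → ℕ
  | _, 0 => 0
  | [], _+1 => 0
  | Step.N :: p, x+1 => lowH p (x+1) + 1
  | Step.E :: p, x+1 => lowH p x
  | Step.D :: p, x+1 => lowH p x + 1

/-- The lowest lattice path from `(0,0)` to `(b,a)` weakly above the line segment
from `(0,0)` to `(b,a)`. -/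
def nuAB (a b : ℕ) : List Step :=
  (List.range b).flatMap (fun x =>
    List.replicate (((x+1)*a + b - 1)/b - (x*a + b - 1)/b) Step.N ++ [Step.E])

/-- Number of large rational `(a,b)`-Schröder paths with `i` diagonal steps. -/
noncomputable def largeCount (a b i : ℕ) : ℕ :=
  Nat.card {π : List Step // IsLargeSchroder (nuAB a b) π ∧ π.count Step.D = i}

/-- Number of small rational `(a,b)`-Schröder paths with `i` diagonal steps. -/
noncomputable def smallCount (a b i : ℕ) : ℕ :=
  Nat.card {π : List Step // IsSmallSchroder (nuAB a b) π ∧ π.count Step.D = i}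

/-- Binomial coefficient with an integer lower entry (zero when negative). -/
def chooseZ (n : ℕ) (k : ℤ) : ℕ := if 0 ≤ k then n.choose k.toNat else 0

/-- The region weakly above `ν` in the rectangle `[0,b] × [0,a]`. -/
def InRegion (ν : List Step) (p : ℕ × ℕ) : Prop :=
  p.1 ≤ eLen ν ∧ p.2 ≤ nLen ν ∧ lowH ν p.1 ≤ p.2

/-- Two points of the region are ν-incompatible if one is strictly southwest of the other and
the rectangle they span lies in the region (equivalently its bottom-right corner does). -/
def Incompat (ν : List Step) (p q : ℕ × ℕ) : Prop :=
  ((p.1 < q.1 ∧ p.2 < q.2) ∨ (q.1 < p.1 ∧ q.2 < p.2)) ∧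
    InRegion ν (max p.1 q.1, min p.2 q.2)

/-- A ν-binary tree: a maximal set of pairwise ν-compatible points of the region. -/
def IsBinaryTree (ν : List Step) (T : Finset (ℕ × ℕ)) : Prop :=
  (∀ p ∈ T, InRegion ν p) ∧ (∀ p ∈ T, ∀ q ∈ T, ¬ Incompat ν p q) ∧
    ∀ r, InRegion ν r → (∀ p ∈ T, ¬ Incompat ν r p) → r ∈ T

/-- A ν-Schröder tree: pairwise ν-compatible points of the region containing the root
`(0,a)` and meeting every row and every column. -/
def IsSchroderTree (ν : List Step) (T : Finset (ℕ × ℕ)) : Prop :=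
  (∀ p ∈ T, InRegion ν p) ∧ (∀ p ∈ T, ∀ q ∈ T, ¬ Incompat ν p q) ∧
    (0, nLen ν) ∈ T ∧ (∀ y ≤ nLen ν, ∃ p ∈ T, p.2 = y) ∧ (∀ x ≤ eLen ν, ∃ p ∈ T, p.1 = x)

/-- One contraction step: delete a node, provided the result is still a ν-Schröder tree. -/
def ContractStep (ν : List Step) (T T' : Finset (ℕ × ℕ)) : Prop :=
  ∃ q ∈ T, T' = T.erase q ∧ IsSchroderTree ν T'

/-- `p` is a leaf of the (plane tree associated to the) node set `T`: no node strictly below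
it in its column and none strictly to its right in its row. -/
def IsLeafIn (T : Finset (ℕ × ℕ)) (p : ℕ × ℕ) : Prop :=
  (∀ q ∈ T, ¬(q.1 = p.1 ∧ q.2 < p.2)) ∧ (∀ q ∈ T, ¬(q.2 = p.2 ∧ p.1 < q.1))

/-- Starting points of vertical runs and ending points of horizontal runs of `ν`. -/
def leafPts (ν : List Step) : Finset (ℕ × ℕ) :=
  (valleyPts ν 0 0).toFinset ∪ (if ν.head? = some Step.N then {((0 : ℕ), (0 : ℕ))} else ∅) ∪
    (if ν.getLast? = some Step.E then {(eLen ν, nLen ν)} else ∅)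

/-- `horizNu ν x y`: maximal number of east steps that can be placed starting at `(x,y)`
before crossing `ν` (staying within the bounding rectangle). -/
def horizNu (ν : List Step) (x y : ℕ) : ℕ :=
  ((Finset.Icc 1 (eLen ν - x)).filter (fun k => lowH ν (x + k) ≤ y)).card

/-- No `N` step of the given path (started at `(x,y)`) has initial point with
`horizNu`-value `h`. -/
def noNAt (ν : List Step) (h : ℕ) : List Step → ℕ → ℕ → Prop
  | [], _, _ => True
  | Step.N :: p, x, y => horizNu ν x y ≠ h ∧ noNAt ν h p x (y+1)
  | Step.E :: p, x, y => noNAt ν h p (x+1) y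
  | Step.D :: p, x, y => noNAt ν h p (x+1) (y+1)

/-- Right contraction: replace a consecutive `EN` pair (a valley) by a `D` step. -/
def RightC (μ lam : List Step) : Prop :=
  ∃ p q, μ = p ++ Step.E :: Step.N :: q ∧ lam = p ++ Step.D :: q

/-- Left contraction: delete an `E` step together with the most recent preceding `N` step
whose initial point has the same `horizNu` statistic as the initial point of the `E` step,
shift the intermediate subpath, and place a `D` step at the initial point of the `N` step. -/
def LeftC (ν μ lam : List Step) : Prop :=
  ∃ p m q, μ = p ++ Step.N :: (m ++ Step.E :: q) ∧ lam = p ++ Step.D :: (m ++ q) ∧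
    horizNu ν (eLen p) (nLen p)
      = horizNu ν (eLen (p ++ Step.N :: m)) (nLen (p ++ Step.N :: m)) ∧
    noNAt ν (horizNu ν (eLen (p ++ Step.N :: m)) (nLen (p ++ Step.N :: m)))
      m (eLen p) (nLen p + 1)

/-- Diagonal contraction: delete an `E` step ending at the initial point `r` of a `D` step,
together with the most recent preceding `N` step whose initial point `s` satisfies
`horizNu s = horizNu r`, shift the intermediate subpath, and place a `D` step at `s`. -/
def DiagC (ν μ lam : List Step) : Prop :=
  ∃ p m q, μ = p ++ Step.N :: (m ++ Step.E :: Step.D :: q) ∧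
    lam = p ++ Step.D :: (m ++ Step.D :: q) ∧
    horizNu ν (eLen p) (nLen p)
      = horizNu ν (eLen (p ++ Step.N :: m) + 1) (nLen (p ++ Step.N :: m)) ∧
    noNAt ν (horizNu ν (eLen (p ++ Step.N :: m) + 1) (nLen (p ++ Step.N :: m)))
      m (eLen p) (nLen p + 1)

/-- Cover relation of the contraction poset of ν-Schröder paths. -/
def Covers (ν μ lam : List Step) : Prop :=
  IsSmallSchroder ν μ ∧ IsSmallSchroder ν lam ∧
    (RightC μ lam ∨ LeftC ν μ lam ∨ DiagC ν μ lam)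

/-- The Morse matching: `σ` (having a `D` step preceded by no valley) is matched with the
path `π` obtained by replacing the first such `D` step by `EN`. -/
def MorseM (ν : List Step) : Set (List Step × List Step) :=
  { z | ∃ p q, Step.D ∉ p ∧ valleys p = 0 ∧
      z.2 = p ++ Step.D :: q ∧ z.1 = p ++ Step.E :: Step.N :: q ∧ IsSmallSchroder ν z.2 }

/-- Twice the area between a small ν-Schröder path and `ν`. -/
def area2 (ν π : List Step) : ℕ :=
  ∑ x ∈ Finset.range (eLen ν), (colVal π x - colVal ν x)

/-- An `(I,J̄)`-forest: increasing, non-crossing arcs. -/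
def IsIJForest (I J : Finset ℕ) (F : Finset (ℕ × ℕ)) : Prop :=
  (∀ a ∈ F, a.1 ∈ I ∧ a.2 ∈ J ∧ a.1 < a.2) ∧
    (∀ a ∈ F, ∀ a' ∈ F, ¬(a.1 < a'.1 ∧ a'.1 < a.2 ∧ a.2 < a'.2))

/-- A covering `(I,J̄)`-forest: contains the arc `(1,n)` and has no isolated node. -/
def IsCoveringForest (n : ℕ) (I J : Finset ℕ) (F : Finset (ℕ × ℕ)) : Prop :=
  IsIJForest I J F ∧ (1, n) ∈ F ∧
    (∀ i ∈ I, ∃ a ∈ F, a.1 = i) ∧ (∀ j ∈ J, ∃ a ∈ F, a.2 = j)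

/-- The lattice path read off from the interleaving of `I` and `J̄` (elements `2,…,n-1`,
`E` for elements of `I`, `N` for the others). -/
def nuOf (n : ℕ) (I : Finset ℕ) : List Step :=
  (List.range' 2 (n - 2)).map (fun k => if k ∈ I then Step.E else Step.N)

/-! Send the arc `(i, j̄)` to the point `(rank of i in I, rank of j̄ in J̄)`; this map is injective
on `I × J̄` and its image is the rectangle `[0, eLen ν] × [0, nLen ν]`. Reading `ν` up to the `E`
step labelled by `i ∈ I` shows that the lowest point of `ν` in column `rank_I i` has height
`rank_J̄ i`. Hence a point lies weakly above `ν` iff its arc is increasing, two points are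
`ν`-incompatible iff their arcs cross, the arc `(1, n)` goes to the root `(0, nLen ν)`, and a
forest covers every node iff its image meets every column and every row. So taking images
matches covering forests with `ν`-Schröder trees. -/

namespace Finset

variable {α : Type*} [LinearOrder α]

def rank (S : Finset α) (a : α) : ℕ := #{x ∈ S | x < a}

variable {S : Finset α} {a b : α}

theorem rank_mono : Monotone S.rank := fun _ _ hab =>
  card_le_card <| monotone_filter_right _ fun _ _ hx => hx.trans_le hab

theorem rank_lt_rank (ha : a ∈ S) (hab : a < b) : S.rank a < S.rank b :=
  card_lt_card <| (ssubset_iff_of_subset <| monotone_filter_right _ fun _ _ hx => hx.trans hab).2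
    ⟨a, by simp [ha, hab]⟩

theorem rank_lt_rank_iff (ha : a ∈ S) : S.rank a < S.rank b ↔ a < b :=
  ⟨fun h => lt_of_not_ge fun hba => h.not_ge (rank_mono hba), rank_lt_rank ha⟩

theorem rank_le_rank_iff (hb : b ∈ S) : S.rank a ≤ S.rank b ↔ a ≤ b := by
  simpa only [not_lt] using (rank_lt_rank_iff hb).not

theorem rank_injOn : Set.InjOn S.rank S := fun _ ha _ hb h =>
  le_antisymm ((rank_le_rank_iff hb).1 h.le) ((rank_le_rank_iff ha).1 h.ge)

theorem rank_lt_card (ha : a ∈ S) : S.rank a < #S :=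
  card_lt_card <| (ssubset_iff_of_subset (filter_subset _ _)).2 ⟨a, ha, by simp⟩

theorem rank_eq_zero (h : ∀ x ∈ S, a ≤ x) : S.rank a = 0 :=
  card_eq_zero.2 <| filter_eq_empty_iff.2 fun x hx => not_lt.2 (h x hx)

theorem rank_eq_card (h : ∀ x ∈ S, x < a) : S.rank a = #S :=
  congrArg card (filter_true_of_mem h)

theorem rank_add_one_eq_card (ha : a ∈ S) (h : ∀ x ∈ S, x ≤ a) : S.rank a + 1 = #S := by
  rw [rank, ← card_erase_add_one ha]
  congr 2
  ext x
  simp only [mem_filter, mem_erase]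
  exact ⟨fun ⟨hx, hxa⟩ => ⟨hxa.ne, hx⟩, fun ⟨hxa, hx⟩ => ⟨hx, (h x hx).lt_of_ne hxa⟩⟩

theorem image_rank (S : Finset α) : S.image S.rank = range #S :=
  eq_of_subset_of_card_le
    (fun _ hx => by
      obtain ⟨a, ha, rfl⟩ := mem_image.1 hx
      exact mem_range.2 (rank_lt_card ha))
    (by rw [card_range, card_image_of_injOn rank_injOn])

theorem exists_rank_eq {x : ℕ} (hx : x < #S) : ∃ a ∈ S, S.rank a = x :=
  mem_image.1 (S.image_rank ▸ mem_range.2 hx)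

theorem forall_exists_rank_eq_iff {β : Type*} {F : Finset β} {g : β → α}
    (hg : ∀ b ∈ F, g b ∈ S) :
    (∀ x < #S, ∃ b ∈ F, S.rank (g b) = x) ↔ ∀ a ∈ S, ∃ b ∈ F, g b = a := by
  constructor
  · intro h a ha
    obtain ⟨b, hb, hba⟩ := h _ (rank_lt_card ha)
    exact ⟨b, hb, rank_injOn (hg b hb) ha hba⟩
  · intro h x hx
    obtain ⟨a, ha, rfl⟩ := exists_rank_eq hx
    obtain ⟨b, hb, rfl⟩ := h a ha
    exact ⟨b, hb, rfl⟩

theorem rank_add_one (S : Finset ℕ) (i : ℕ) :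
    S.rank (i + 1) = S.rank i + if i ∈ S then 1 else 0 := by
  unfold rank
  split_ifs with hi
  · rw [← card_insert_of_notMem (by simp : i ∉ ({x ∈ S | x < i} : Finset ℕ))]
    congr 1
    ext x
    grind
  · congr 1
    ext x
    grind

end Finset

theorem eLen_append (p q : List Step) : eLen (p ++ q) = eLen p + eLen q := by
  simp only [eLen, List.count_append]; ring

theorem nLen_append (p q : List Step) : nLen (p ++ q) = nLen p + nLen q := by
  simp only [nLen, List.count_append]; ring

theorem lowH_append_E (p q : List Step) : lowH (p ++ Step.E :: q) (eLen p + 1) = nLen p := by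
  induction p with
  | nil => simp [lowH, eLen, nLen]
  | cons s p ih =>
    cases s
    · rw [show eLen (Step.N :: p) = eLen p by simp [eLen]]
      simp [lowH, ih, nLen, add_right_comm]
    · rw [show eLen (Step.E :: p) = eLen p + 1 by simp [eLen, add_right_comm]]
      simp [lowH, ih, nLen]
    · rw [show eLen (Step.D :: p) = eLen p + 1 by simp [eLen, add_assoc]]
      simp [lowH, ih, nLen, add_assoc]

theorem nuOf_add_one {i : ℕ} (I : Finset ℕ) (hi : 2 ≤ i) :
    nuOf (i + 1) I = nuOf i I ++ [if i ∈ I then Step.E else Step.N] := by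
  obtain ⟨k, rfl⟩ := Nat.exists_eq_add_of_le hi
  simp [nuOf, show 2 + k + 1 - 2 = k + 1 by omega, List.range'_concat]

theorem nuOf_eq_append {n i : ℕ} (I : Finset ℕ) (hi : 2 ≤ i) (hin : i < n) :
    ∃ q, nuOf n I = nuOf i I ++ (if i ∈ I then Step.E else Step.N) :: q := by
  obtain ⟨k, rfl⟩ := Nat.exists_eq_add_of_lt hin
  refine ⟨(List.range' (i + 1) k).map fun k => if k ∈ I then Step.E else Step.N, ?_⟩
  rw [nuOf, nuOf, show i + k + 1 - 2 = (i - 2) + (k + 1) by omega, ← List.range'_append]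
  simp [List.range'_succ, show 2 + (i - 2) = i by omega]

open Finset

structure IsNodePartition (n : ℕ) (I J : Finset ℕ) : Prop where
  union_eq : I ∪ J = Icc 1 n
  disjoint : Disjoint I J
  one_mem_left : 1 ∈ I
  last_mem_right : n ∈ J

def arcPoint (I J : Finset ℕ) (a : ℕ × ℕ) : ℕ × ℕ := (I.rank a.1, J.rank a.2)

theorem arcPoint_injOn (I J : Finset ℕ) : Set.InjOn (arcPoint I J) ↑(I ×ˢ J) :=
  fun a ha b hb hab => by
    rw [mem_coe, mem_product] at ha hb
    exact Prod.ext (rank_injOn ha.1 hb.1 (congrArg Prod.fst hab))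
      (rank_injOn ha.2 hb.2 (congrArg Prod.snd hab))

theorem IsIJForest.subset_product {I J : Finset ℕ} {F : Finset (ℕ × ℕ)} (hF : IsIJForest I J F) :
    F ⊆ I ×ˢ J :=
  fun a ha => mem_product.2 ⟨(hF.1 a ha).1, (hF.1 a ha).2.1⟩

namespace IsNodePartition

variable {n : ℕ} {I J : Finset ℕ} {i j k : ℕ}

theorem mem_Icc_of_mem_left (h : IsNodePartition n I J) (hi : i ∈ I) : i ∈ Icc 1 n :=
  h.union_eq ▸ mem_union_left J hi

theorem mem_Icc_of_mem_right (h : IsNodePartition n I J) (hj : j ∈ J) : j ∈ Icc 1 n :=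
  h.union_eq ▸ mem_union_right I hj

theorem mem_right_iff (h : IsNodePartition n I J) (hk : k ∈ Icc 1 n) : k ∈ J ↔ k ∉ I := by
  rw [← h.union_eq, mem_union] at hk
  exact ⟨fun hkJ hkI => disjoint_left.1 h.disjoint hkI hkJ, hk.resolve_left⟩

theorem two_le (h : IsNodePartition n I J) : 2 ≤ n := by
  have hn1 : n ≠ 1 := fun hn => disjoint_left.1 h.disjoint h.one_mem_left (hn ▸ h.last_mem_right)
  have := mem_Icc.1 (h.mem_Icc_of_mem_right h.last_mem_right)
  omega

theorem lt_of_mem_left (h : IsNodePartition n I J) (hi : i ∈ I) : i < n := by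
  refine (mem_Icc.1 (h.mem_Icc_of_mem_left hi)).2.lt_of_ne ?_
  rintro rfl
  exact disjoint_left.1 h.disjoint hi h.last_mem_right

theorem rank_left_one (h : IsNodePartition n I J) : I.rank 1 = 0 :=
  rank_eq_zero fun _ hk => (mem_Icc.1 (h.mem_Icc_of_mem_left hk)).1

theorem one_notMem_right (h : IsNodePartition n I J) : 1 ∉ J :=
  disjoint_left.1 h.disjoint h.one_mem_left

theorem rank_right_one (h : IsNodePartition n I J) : J.rank 1 = 0 :=
  rank_eq_zero fun _ hk => (mem_Icc.1 (h.mem_Icc_of_mem_right hk)).1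

theorem counts_nuOf_eq_ranks (h : IsNodePartition n I J) (hi : 2 ≤ i) (hin : i ≤ n) :
    eLen (nuOf i I) + 1 = I.rank i ∧ nLen (nuOf i I) = J.rank i := by
  induction i, hi using Nat.le_induction with
  | base =>
    have hI := I.rank_add_one 1
    have hJ := J.rank_add_one 1
    simp only [h.rank_left_one, h.rank_right_one, h.one_mem_left, h.one_notMem_right] at hI hJ
    exact ⟨hI.symm, hJ.symm⟩
  | succ i hi ih =>
    obtain ⟨ihE, ihN⟩ := ih (by omega)
    have hiJ := h.mem_right_iff (k := i) (mem_Icc.2 ⟨by omega, by omega⟩)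
    rw [nuOf_add_one I hi, eLen_append, nLen_append, rank_add_one, rank_add_one, ← ihE, ← ihN]
    by_cases hiI : i ∈ I <;> simp [hiI, hiJ, eLen, nLen]

theorem eLen_nuOf_add_one (h : IsNodePartition n I J) : eLen (nuOf n I) + 1 = #I := by
  rw [(h.counts_nuOf_eq_ranks h.two_le le_rfl).1]
  exact rank_eq_card fun _ => h.lt_of_mem_left

theorem nLen_nuOf (h : IsNodePartition n I J) : nLen (nuOf n I) = J.rank n :=
  (h.counts_nuOf_eq_ranks h.two_le le_rfl).2

theorem nLen_nuOf_add_one (h : IsNodePartition n I J) : nLen (nuOf n I) + 1 = #J := by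
  rw [h.nLen_nuOf]
  exact rank_add_one_eq_card h.last_mem_right fun j hj => (mem_Icc.1 (h.mem_Icc_of_mem_right hj)).2

theorem lowH_nuOf_rank (h : IsNodePartition n I J) (hi : i ∈ I) :
    lowH (nuOf n I) (I.rank i) = J.rank i := by
  obtain rfl | hi1 := eq_or_ne i 1
  · rw [h.rank_left_one, h.rank_right_one, lowH]
  have hi2 : 2 ≤ i := by have := mem_Icc.1 (h.mem_Icc_of_mem_left hi); omega
  have hin := h.lt_of_mem_left hi
  obtain ⟨q, hq⟩ := nuOf_eq_append I hi2 hin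
  obtain ⟨hE, hN⟩ := h.counts_nuOf_eq_ranks hi2 hin.le
  rw [hq, if_pos hi, ← hE, ← hN, lowH_append_E]

theorem inRegion_rank_iff (h : IsNodePartition n I J) (hi : i ∈ I) (hj : j ∈ J) :
    InRegion (nuOf n I) (I.rank i, J.rank j) ↔ i < j := by
  have hij : i ≠ j := by rintro rfl; exact disjoint_left.1 h.disjoint hi hj
  have hrI := rank_lt_card hi
  have hrJ := rank_lt_card hj
  have := h.eLen_nuOf_add_one
  have := h.nLen_nuOf_add_one
  rw [InRegion, h.lowH_nuOf_rank hi, rank_le_rank_iff hj]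
  dsimp only
  omega

theorem incompat_arcPoint_iff (h : IsNodePartition n I J) {a b : ℕ × ℕ} (ha : a ∈ I ×ˢ J)
    (hb : b ∈ I ×ˢ J) :
    Incompat (nuOf n I) (arcPoint I J a) (arcPoint I J b) ↔
      (a.1 < b.1 ∧ b.1 < a.2 ∧ a.2 < b.2) ∨ (b.1 < a.1 ∧ a.1 < b.2 ∧ b.2 < a.2) := by
  rw [mem_product] at ha hb
  have hmax : max a.1 b.1 ∈ I := max_rec' (· ∈ I) ha.1 hb.1
  have hmin : min a.2 b.2 ∈ J := min_rec' (· ∈ J) ha.2 hb.2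
  simp only [Incompat, arcPoint, rank_lt_rank_iff ha.1, rank_lt_rank_iff ha.2,
    rank_lt_rank_iff hb.1, rank_lt_rank_iff hb.2, ← rank_mono.map_max, ← rank_mono.map_min,
    h.inRegion_rank_iff hmax hmin, max_lt_iff, lt_min_iff]
  omega

theorem arcPoint_eq_root_iff (h : IsNodePartition n I J) {a : ℕ × ℕ} (ha : a ∈ I ×ˢ J) :
    arcPoint I J a = (0, nLen (nuOf n I)) ↔ a = (1, n) := by
  rw [mem_product] at ha
  rw [← h.rank_left_one, h.nLen_nuOf, arcPoint, Prod.ext_iff, Prod.ext_iff,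
    rank_injOn.eq_iff ha.1 h.one_mem_left, rank_injOn.eq_iff ha.2 h.last_mem_right]

theorem isCoveringForest_iff (h : IsNodePartition n I J) {F : Finset (ℕ × ℕ)}
    (hF : F ⊆ I ×ˢ J) :
    IsCoveringForest n I J F ↔ IsSchroderTree (nuOf n I) (F.image (arcPoint I J)) := by
  have hmem : ∀ a ∈ F, a.1 ∈ I ∧ a.2 ∈ J := fun a ha => mem_product.1 (hF ha)
  have arcs : (∀ a ∈ F, a.1 ∈ I ∧ a.2 ∈ J ∧ a.1 < a.2) ↔
      ∀ p ∈ F.image (arcPoint I J), InRegion (nuOf n I) p := by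
    rw [forall_mem_image]
    refine forall₂_congr fun a ha => ?_
    rw [arcPoint, h.inRegion_rank_iff (hmem a ha).1 (hmem a ha).2]
    simp only [hmem a ha, true_and]
  have noncrossing : (∀ a ∈ F, ∀ b ∈ F, ¬(a.1 < b.1 ∧ b.1 < a.2 ∧ a.2 < b.2)) ↔
      ∀ p ∈ F.image (arcPoint I J), ∀ q ∈ F.image (arcPoint I J), ¬Incompat (nuOf n I) p q := by
    simp only [forall_mem_image]
    constructor
    · intro hnc a ha b hb hab
      rcases (h.incompat_arcPoint_iff (hF ha) (hF hb)).1 hab with hc | hc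
      exacts [hnc a ha b hb hc, hnc b hb a ha hc]
    · intro hc a ha b hb hab
      exact hc ha hb ((h.incompat_arcPoint_iff (hF ha) (hF hb)).2 (Or.inl hab))
  have root : (1, n) ∈ F ↔ (0, nLen (nuOf n I)) ∈ F.image (arcPoint I J) := by
    rw [mem_image]
    refine ⟨fun h1n => ⟨_, h1n, (h.arcPoint_eq_root_iff (hF h1n)).2 rfl⟩, ?_⟩
    rintro ⟨a, ha, hroot⟩
    exact (h.arcPoint_eq_root_iff (hF ha)).1 hroot ▸ ha
  have rows : (∀ j ∈ J, ∃ a ∈ F, a.2 = j) ↔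
      ∀ y ≤ nLen (nuOf n I), ∃ p ∈ F.image (arcPoint I J), p.2 = y := by
    simp only [exists_mem_image, ← Nat.lt_add_one_iff, h.nLen_nuOf_add_one]
    exact (forall_exists_rank_eq_iff fun a ha => (hmem a ha).2).symm
  have columns : (∀ i ∈ I, ∃ a ∈ F, a.1 = i) ↔
      ∀ x ≤ eLen (nuOf n I), ∃ p ∈ F.image (arcPoint I J), p.1 = x := by
    simp only [exists_mem_image, ← Nat.lt_add_one_iff, h.eLen_nuOf_add_one]
    exact (forall_exists_rank_eq_iff fun a ha => (hmem a ha).1).symm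
  rw [IsCoveringForest, IsIJForest, IsSchroderTree, arcs, noncrossing, root, rows, columns]
  tauto

theorem subset_image_arcPoint (h : IsNodePartition n I J) {T : Finset (ℕ × ℕ)}
    (hT : IsSchroderTree (nuOf n I) T) : T ⊆ (I ×ˢ J).image (arcPoint I J) := by
  rintro ⟨x, y⟩ hp
  obtain ⟨hx, hy, -⟩ := hT.1 _ hp
  have := h.eLen_nuOf_add_one
  have := h.nLen_nuOf_add_one
  obtain ⟨i, hi, rfl⟩ := exists_rank_eq (S := I) (x := x) (by omega)
  obtain ⟨j, hj, rfl⟩ := exists_rank_eq (S := J) (x := y) (by omega)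
  exact mem_image.2 ⟨(i, j), mem_product.2 ⟨hi, hj⟩, rfl⟩

end IsNodePartition

theorem coveringForests_equiv_schroderTrees_general (n : ℕ) (I J : Finset ℕ)
    (hpart : I ∪ J = Finset.Icc 1 n) (hdisj : Disjoint I J) (h1 : 1 ∈ I) (hnJ : n ∈ J) :
    ∃ e : {F : Finset (ℕ × ℕ) // IsCoveringForest n I J F}
            ≃ {T : Finset (ℕ × ℕ) // IsSchroderTree (nuOf n I) T},
      ∀ F, (e F : Finset (ℕ × ℕ))
        = (F : Finset (ℕ × ℕ)).image
            (fun a => ((I.filter (· < a.1)).card, (J.filter (· < a.2)).card)) := by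
  have h : IsNodePartition n I J := ⟨hpart, hdisj, h1, hnJ⟩
  have hsub : ∀ F : {F // IsCoveringForest n I J F}, F.1 ⊆ I ×ˢ J := fun F => F.2.1.subset_product
  let e : {F // IsCoveringForest n I J F} → {T // IsSchroderTree (nuOf n I) T} :=
    fun F => ⟨F.1.image (arcPoint I J), (h.isCoveringForest_iff (hsub F)).1 F.2⟩
  refine ⟨Equiv.ofBijective e ⟨fun F F' hFF' => ?_, fun ⟨T, hT⟩ => ?_⟩, fun F => rfl⟩
  · exact Subtype.ext <| (image_eq_image_iff_of_injOn (arcPoint_injOn I J) (hsub F) (hsub F')).1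
      (congrArg Subtype.val hFF')
  · have hFT : ((I ×ˢ J).filter (arcPoint I J · ∈ T)).image (arcPoint I J) = T := by
      rw [← filter_image (p := (· ∈ T)), filter_mem_eq_inter,
        inter_eq_right.2 (h.subset_image_arcPoint hT)]
    refine ⟨⟨_, (h.isCoveringForest_iff (filter_subset _ _)).2 ?_⟩, Subtype.ext hFT⟩
    rwa [hFT]

/-- Covering `(I,J̄)`-forests are in bijection with ν-Schröder trees, where
ν is the lattice path read from the interleaving of `I` and `J̄`; the bijection sends the arc
with endpoint labels `(E_i, N_j)` to the lattice point `(i,j)`. -/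
theorem coveringForests_equiv_schroderTrees (n : ℕ) (I J : Finset ℕ) (hn : 2 ≤ n)
    (hpart : I ∪ J = Finset.Icc 1 n) (hdisj : Disjoint I J) (h1 : 1 ∈ I) (hnJ : n ∈ J) :
    ∃ e : {F : Finset (ℕ × ℕ) // IsCoveringForest n I J F}
            ≃ {T : Finset (ℕ × ℕ) // IsSchroderTree (nuOf n I) T},
      ∀ F, (e F : Finset (ℕ × ℕ))
        = (F : Finset (ℕ × ℕ)).image
            (fun a => ((I.filter (· < a.1)).card, (J.filter (· < a.2)).card)) :=
  coveringForests_equiv_schroderTrees_general n I J hpart hdisj h1 hnJ
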